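/- For every input sequence of items in (0,1], the number of bins used by the Relaxed Online Match algorithm is at most the number of bins used by Matching Best Fit. -/
import Mathlib


/-- One step of Matching Best Fit (state: open bins each holding one large item,
number of bins opened so far). -/
noncomputable def mbfStep (s : List ℝ × ℕ) (x : ℝ) : List ℝ × ℕ :=
  if 1 / 2 < x then (x :: s.1, s.2 + 1)
  else
    match (s.1.filter (fun y => decide (y + x ≤ 1))).max? with
    | some m => (s.1.erase m, s.2)
    | none => (s.1, s.2 + 1)

/-- The number of bins Matching Best Fit opens on the sequence `l`. -/
noncomputable def mbfCost (l : List ℝ) : ℕ := (l.foldl mbfStep ([], 0)).2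

/-- One step of Relaxed Online Match.  The state consists of the list of open bins
each containing a single large item, the level of the current Next-Fit bin of small
items (initialized to `2` so that the first uncompanioned small item opens a bin),
and the number of bins opened so far.  ROM behaves like MBF except that a small item
with no companion is packed by Next Fit into a dedicated list of bins of small items. -/
noncomputable def romStep (s : List ℝ × ℝ × ℕ) (x : ℝ) : List ℝ × ℝ × ℕ :=
  if 1 / 2 < x then (x :: s.1, s.2.1, s.2.2 + 1)
  else
    match (s.1.filter (fun y => decide (y + x ≤ 1))).max? with
    | some m => (s.1.erase m, s.2.1, s.2.2)
    | none =>
        if s.2.1 + x ≤ 1 then (s.1, s.2.1 + x, s.2.2)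
        else (s.1, x, s.2.2 + 1)

/-- The number of bins Relaxed Online Match uses on the sequence `l`. -/
noncomputable def romCost (l : List ℝ) : ℕ := (l.foldl romStep ([], 2, 0)).2.2

/--aux-/
lemma rom_le_mbf_aux (l : List ℝ) : ∀ (A : List ℝ) (b : ℝ) (m r : ℕ), r ≤ m →
    (l.foldl romStep (A, b, r)).2.2 ≤ (l.foldl mbfStep (A, m)).2 := by
  induction l with
  | nil => intro A b m r h; simpa using h
  | cons x xs ih =>
    intro A b m r h
    simp only [List.foldl_cons]
    unfold romStep mbfStep
    by_cases hx : 1 / 2 < x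
    · simp only [if_pos hx]
      exact ih _ _ _ _ (by omega)
    · simp only [if_neg hx]
      cases hm : (A.filter fun y => decide (y + x ≤ 1)).max? with
      | some m' =>
        simp only [hm]
        exact ih _ _ _ _ h
      | none =>
        simp only [hm]
        by_cases hb : b + x ≤ 1
        · simp only [if_pos hb]
          exact ih _ _ _ _ (by omega)
        · simp only [if_neg hb]
          exact ih _ _ _ _ (by omega)

/-- For every input sequence of items in (0,1], Relaxed Online Match uses at most
as many bins as Matching Best Fit. -/
theorem rom_le_mbf (l : List ℝ) (h : ∀ y ∈ l, 0 < y ∧ y ≤ 1) :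
    romCost l ≤ mbfCost l := by
  exact rom_le_mbf_aux l [] 2 0 0 le_rfl
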